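/- arXiv:2406.04724 — 2 statements merged into one kernel-verified Lean document; each statement's English description precedes it below -/
import Mathlib

section
/- Let S be a finite nonempty set, let γ ∈ [0,1), and let K ≥ 0 and Ξ ≥ 0. Let X be a type of information states equipped with: maps T, P : X → PMF S (the next-observation distributions without and with the adversary, respectively), a map next : X → S → X (the information-state update), and functions rV, rU, V, U, δ : X → ℝ. Suppose: (i) for all x, V x = rV x + γ · ∑_{s'∈S} (T x)(s') · V(next x s'); (ii) for all x, U x = rU x + γ · ∑_{s'∈S} (P x)(s') · U(next x s'); (iii) for all x, δ x = (rV x − rU x) + γ · ∑_{s'∈S} (P x)(s') · δ(next x s'); (iv) 0 ≤ V x ≤ K for all x; (v) TV(T x, P x) ≤ Ξ for all x; (vi) U and δ are bounded functions. Then for every x, |V x − U x − δ x| ≤ γKΞ/(1−γ). -/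
/-!
Put `W = V - U - δ`. Subtracting the recursions for `U` and `δ` from the one for `V`, the rewards
cancel and `W x = γ ∑ (T x - P x)(s') V(next x s') + γ ∑ (P x)(s') W(next x s')`. Since `T x - P x`
has total mass zero and `V` takes values in `[0, K]`, the first sum is at most `K · TV(T x, P x)`
in absolute value, and the second is at most `sup |W|`. Hence `sup |W| ≤ γKΞ + γ sup |W|`, where
`sup |W|` is finite because `V`, `U` and `δ` are bounded.
-/

open Finset

theorem PMF.sum_toReal {S : Type*} [Fintype S] (p : PMF S) : ∑ s, (p s).toReal = 1 := by
  rw [← ENNReal.toReal_sum fun s _ ↦ p.apply_ne_top s,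
    ← tsum_fintype (L := SummationFilter.unconditional _), p.tsum_coe, ENNReal.toReal_one]

section WeightedSums

variable {ι : Type*} (s : Finset ι)

/-- Subtracting the midpoint `(a + b) / 2` from `f` does not change the sum. -/
theorem abs_sum_mul_le_of_sum_eq_zero {w f : ι → ℝ} {a b : ℝ} (hw : ∑ i ∈ s, w i = 0)
    (hf : ∀ i ∈ s, f i ∈ Set.Icc a b) :
    |∑ i ∈ s, w i * f i| ≤ (b - a) / 2 * ∑ i ∈ s, |w i| := by
  have hcentre : ∑ i ∈ s, w i * f i = ∑ i ∈ s, w i * (f i - (a + b) / 2) := by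
    simp only [mul_sub, sum_sub_distrib, ← sum_mul, hw, zero_mul, sub_zero]
  rw [hcentre, mul_sum]
  refine (abs_sum_le_sum_abs _ _).trans (sum_le_sum fun i hi ↦ ?_)
  obtain ⟨hai, hib⟩ := hf i hi
  rw [abs_mul, mul_comm]
  exact mul_le_mul_of_nonneg_right (abs_le.2 ⟨by linarith, by linarith⟩) (abs_nonneg _)

theorem abs_sum_mul_le_of_sum_eq_one {p f : ι → ℝ} {C : ℝ} (hp : ∀ i ∈ s, 0 ≤ p i)
    (hp1 : ∑ i ∈ s, p i = 1) (hf : ∀ i ∈ s, |f i| ≤ C) :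
    |∑ i ∈ s, p i * f i| ≤ C :=
  calc |∑ i ∈ s, p i * f i| ≤ ∑ i ∈ s, p i * C := by
        refine (abs_sum_le_sum_abs _ _).trans (sum_le_sum fun i hi ↦ ?_)
        rw [abs_mul, abs_of_nonneg (hp i hi)]
        exact mul_le_mul_of_nonneg_left (hf i hi) (hp i hi)
    _ = C := by rw [← sum_mul, hp1, one_mul]

end WeightedSums

namespace PMF

variable {S : Type*} [Fintype S]

theorem abs_sum_sub_mul_le (p q : PMF S) {f : S → ℝ} {K : ℝ} (hf : ∀ s, f s ∈ Set.Icc 0 K) :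
    |∑ s, ((p s).toReal - (q s).toReal) * f s| ≤
      K * (1 / 2 * ∑ s, |(p s).toReal - (q s).toReal|) :=
  calc _ ≤ (K - 0) / 2 * ∑ s, |(p s).toReal - (q s).toReal| :=
        abs_sum_mul_le_of_sum_eq_zero _
          (by rw [sum_sub_distrib, p.sum_toReal, q.sum_toReal, sub_self]) fun s _ ↦ hf s
    _ = _ := by ring

theorem abs_sum_mul_le (p : PMF S) {f : S → ℝ} {C : ℝ} (hf : ∀ s, |f s| ≤ C) :
    |∑ s, (p s).toReal * f s| ≤ C :=
  abs_sum_mul_le_of_sum_eq_one _ (fun _ _ ↦ ENNReal.toReal_nonneg) p.sum_toReal fun s _ ↦ hf s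

end PMF

theorem le_div_one_sub_of_forall_le_add_mul {X : Type*} {g : X → ℝ} {a γ : ℝ} (hγ : γ < 1)
    (hg : BddAbove (Set.range g)) (h : ∀ C, (∀ y, g y ≤ C) → ∀ x, g x ≤ a + γ * C) (x : X) :
    g x ≤ a / (1 - γ) := by
  have : Nonempty X := ⟨x⟩
  have hsup : ∀ y, g y ≤ ⨆ y, g y := le_ciSup hg
  have hfix : ⨆ y, g y ≤ a + γ * ⨆ y, g y := ciSup_le (h _ hsup)
  exact (hsup x).trans ((le_div_iff₀ (by linarith)).2 (by linarith))

theorem stmt0_general {S : Type*} [Fintype S]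
    (γ K Ξ : ℝ) (hγ0 : 0 ≤ γ) (hγ1 : γ < 1) (hK : 0 ≤ K)
    {X : Type*} (T P : X → PMF S) (next : X → S → X)
    (rV rU V U δ : X → ℝ)
    (hV : ∀ x, V x = rV x + γ * ∑ s' : S, (T x s').toReal * V (next x s'))
    (hU : ∀ x, U x = rU x + γ * ∑ s' : S, (P x s').toReal * U (next x s'))
    (hδ : ∀ x, δ x = (rV x - rU x) + γ * ∑ s' : S, (P x s').toReal * δ (next x s'))
    (hVlb : ∀ x, 0 ≤ V x) (hVub : ∀ x, V x ≤ K)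
    (hTV : ∀ x, (1 / 2 : ℝ) * ∑ s : S, |(T x s).toReal - (P x s).toReal| ≤ Ξ)
    (hUbd : ∃ M, ∀ x, |U x| ≤ M) (hδbd : ∃ M, ∀ x, |δ x| ≤ M) :
    ∀ x, |V x - U x - δ x| ≤ γ * K * Ξ / (1 - γ) := by
  obtain ⟨MU, hMU⟩ := hUbd
  obtain ⟨Mδ, hMδ⟩ := hδbd
  have hW : ∀ x, V x - U x - δ x =
      γ * ∑ s', ((T x s').toReal - (P x s').toReal) * V (next x s') +
        γ * ∑ s', (P x s').toReal * (V (next x s') - U (next x s') - δ (next x s')) := by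
    intro x
    rw [hV x, hU x, hδ x]
    simp only [sub_mul, mul_sub, sum_sub_distrib]
    ring
  have hbdd : BddAbove (Set.range fun x ↦ |V x - U x - δ x|) := by
    refine ⟨K + MU + Mδ, Set.forall_mem_range.2 fun x ↦ ?_⟩
    calc |V x - U x - δ x| ≤ |V x| + |U x| + |δ x| :=
          (abs_sub _ _).trans (add_le_add_left (abs_sub _ _) _)
      _ ≤ K + MU + Mδ :=
          add_le_add (add_le_add (abs_le.2 ⟨by linarith [hVlb x], hVub x⟩) (hMU x)) (hMδ x)
  intro x
  rw [mul_assoc γ K]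
  refine le_div_one_sub_of_forall_le_add_mul hγ1 hbdd (fun C hC y ↦ ?_) x
  have hdrift :=
    ((T y).abs_sum_sub_mul_le (P y) fun s' ↦ ⟨hVlb (next y s'), hVub (next y s')⟩).trans
      (mul_le_mul_of_nonneg_left (hTV y) hK)
  have hnext := (P y).abs_sum_mul_le fun s' ↦ hC (next y s')
  calc |V y - U y - δ y| ≤ γ * |∑ s', ((T y s').toReal - (P y s').toReal) * V (next y s')| +
        γ * |∑ s', (P y s').toReal * (V (next y s') - U (next y s') - δ (next y s'))| := by
        rw [hW y]
        exact (abs_add_le _ _).trans_eq (by rw [abs_mul, abs_mul, abs_of_nonneg hγ0])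
    _ ≤ γ * (K * Ξ) + γ * C := by gcongr

/-- Theorem 1 of the paper.
Let `S` be a finite nonempty set, `γ ∈ [0,1)`, `K ≥ 0`, `Ξ ≥ 0`.  Given information
states `X` with next-observation distributions `T, P : X → PMF S` (without and with the
adversary), update `next : X → S → X`, one-step rewards `rV, rU` and value functions
`V, U, δ` satisfying the three Bellman-type recursions, with `0 ≤ V ≤ K`,
`TV(T x, P x) ≤ Ξ` for all `x`, and `U`, `δ` bounded, then
`|V x − U x − δ x| ≤ γKΞ/(1−γ)` for all `x`. -/
theorem stmt0 {S : Type*} [Fintype S] [Nonempty S]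
    (γ K Ξ : ℝ) (hγ0 : 0 ≤ γ) (hγ1 : γ < 1) (hK : 0 ≤ K) (hΞ : 0 ≤ Ξ)
    {X : Type*} (T P : X → PMF S) (next : X → S → X)
    (rV rU V U δ : X → ℝ)
    (hV : ∀ x, V x = rV x + γ * ∑ s' : S, (T x s').toReal * V (next x s'))
    (hU : ∀ x, U x = rU x + γ * ∑ s' : S, (P x s').toReal * U (next x s'))
    (hδ : ∀ x, δ x = (rV x - rU x) + γ * ∑ s' : S, (P x s').toReal * δ (next x s'))
    (hVlb : ∀ x, 0 ≤ V x) (hVub : ∀ x, V x ≤ K)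
    (hTV : ∀ x, (1 / 2 : ℝ) * ∑ s : S, |(T x s).toReal - (P x s).toReal| ≤ Ξ)
    (hUbd : ∃ M, ∀ x, |U x| ≤ M) (hδbd : ∃ M, ∀ x, |δ x| ≤ M) :
    ∀ x, |V x - U x - δ x| ≤ γ * K * Ξ / (1 - γ) :=
  stmt0_general γ K Ξ hγ0 hγ1 hK T P next rV rU V U δ hV hU hδ hVlb hVub hTV hUbd hδbd
end

section
/- Let S be a finite metric space with distance d, let t : S → PMF S and ν : S → PMF S be kernels, let b be a PMF on S, let s_o ∈ S, and let ε, ξ ≥ 0. Suppose: (i) b is supported on the closed ε-ball around s_o; (ii) for all s, s' ∈ S with d(s,s') ≤ ε, W1(t s, t s') ≤ ξ; and (iii) for every s' ∈ S, ν s' is supported on the closed ε-ball around s'. Then W1(t s_o, (b.bind t).bind ν) ≤ ξ + ε. -/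
open scoped BigOperators

/-- A coupling of two PMFs on `S` is a PMF on `S × S` whose marginals are the two PMFs. -/
def IsCoupling {S : Type*} (c : PMF (S × S)) (μ ν : PMF S) : Prop :=
  c.map Prod.fst = μ ∧ c.map Prod.snd = ν

/-- The 1-Wasserstein distance between PMFs on a finite metric space: the infimum over
couplings of the expected distance. -/
noncomputable def W1 {S : Type*} [Fintype S] [MetricSpace S] (μ ν : PMF S) : ℝ :=
  sInf ((fun c : PMF (S × S) => ∑ p : S × S, (c p).toReal * dist p.1 p.2) ''
    {c | IsCoupling c μ ν})


/-! Mixing near-optimal couplings of `t s_o` with the `t s` according to `b` shows that `W1 μ ·`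
is convex, so `W1 (t s_o) (b.bind t) ≤ ξ`. Keeping the first coordinate of a coupling of
`t s_o` with `b.bind t` and moving the second coordinate `y` according to `ν y` gives a coupling
of `t s_o` with `(b.bind t).bind ν` whose cost is larger by at most `ε`, since no point moves
farther than `ε`. -/

namespace PMF

variable {α : Type*} [Fintype α]

lemma sum_toReal_s11 (p : PMF α) : ∑ a, (p a).toReal = 1 := by
  rw [← ENNReal.toReal_sum fun a _ => p.apply_ne_top a, ← ENNReal.toReal_one, ← p.tsum_coe,
    tsum_fintype]

lemma sum_toReal_mul_le {p : PMF α} {f : α → ℝ} {r : ℝ} (h : ∀ a ∈ p.support, f a ≤ r) :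
    ∑ a, (p a).toReal * f a ≤ r :=
  calc ∑ a, (p a).toReal * f a ≤ ∑ a, (p a).toReal * r := by
        refine Finset.sum_le_sum fun a _ => ?_
        by_cases ha : p a = 0
        · simp [ha]
        · exact mul_le_mul_of_nonneg_left (h a ha) ENNReal.toReal_nonneg
    _ = r := by rw [← Finset.sum_mul, p.sum_toReal_s11, one_mul]

lemma toReal_bind_apply {β : Type*} (p : PMF α) (f : α → PMF β) (b : β) :
    (p.bind f b).toReal = ∑ a, (p a).toReal * (f a b).toReal := by
  rw [bind_apply, tsum_fintype, ENNReal.toReal_sum fun a _ =>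
    ENNReal.mul_ne_top (p.apply_ne_top a) ((f a).apply_ne_top b)]
  simp only [ENNReal.toReal_mul]

end PMF

section Coupling

variable {S : Type*}

lemma exists_isCoupling (μ ν : PMF S) : ∃ c : PMF (S × S), IsCoupling c μ ν := by
  refine ⟨μ.bind fun x => ν.map (Prod.mk x), ?_, ?_⟩ <;>
    simp only [PMF.map_bind, PMF.map_comp]
  · exact (congrArg μ.bind (funext fun x => PMF.map_const ν x)).trans μ.bind_pure
  · exact (congrArg μ.bind (funext fun _ => ν.map_id)).trans (μ.bind_const ν)

lemma IsCoupling.bind {α : Type*} {c : α → PMF (S × S)} {μ ν : α → PMF S}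
    (h : ∀ a, IsCoupling (c a) (μ a) (ν a)) (p : PMF α) :
    IsCoupling (p.bind c) (p.bind μ) (p.bind ν) := by
  constructor <;> rw [PMF.map_bind] <;> congr 1 <;> funext a
  exacts [(h a).1, (h a).2]

noncomputable def glueSnd (c : PMF (S × S)) (κ : S → PMF S) : PMF (S × S) :=
  c.bind fun q => (κ q.2).map (Prod.mk q.1)

lemma isCoupling_glueSnd {c : PMF (S × S)} {μ ν : PMF S} (h : IsCoupling c μ ν)
    (κ : S → PMF S) : IsCoupling (glueSnd c κ) μ (ν.bind κ) := by
  constructor <;> simp only [glueSnd, PMF.map_bind, PMF.map_comp]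
  · rw [← h.1, ← PMF.bind_pure_comp]
    exact congrArg c.bind (funext fun q => PMF.map_const (κ q.2) q.1)
  · rw [← h.2, PMF.bind_map]
    exact congrArg c.bind (funext fun q => PMF.map_id (κ q.2))

end Coupling

section TransportCost

variable {S : Type*} [Fintype S] [MetricSpace S]

noncomputable def transportCost (c : PMF (S × S)) : ℝ :=
  ∑ p : S × S, (c p).toReal * dist p.1 p.2

lemma transportCost_nonneg (c : PMF (S × S)) : 0 ≤ transportCost c :=
  Finset.sum_nonneg fun _ _ => mul_nonneg ENNReal.toReal_nonneg dist_nonneg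

lemma transportCost_bind {α : Type*} [Fintype α] (p : PMF α) (c : α → PMF (S × S)) :
    transportCost (p.bind c) = ∑ a, (p a).toReal * transportCost (c a) := by
  simp only [transportCost, PMF.toReal_bind_apply, Finset.sum_mul, Finset.mul_sum]
  rw [Finset.sum_comm]
  simp only [mul_assoc]

lemma transportCost_map_prodMk (x : S) (p : PMF S) :
    transportCost (p.map (Prod.mk x)) = ∑ z, (p z).toReal * dist x z := by
  rw [← PMF.bind_pure_comp, transportCost_bind]
  congr 1
  funext z
  rw [transportCost, Finset.sum_eq_single (x, z) (fun q _ hq => by simp [PMF.pure_apply, hq])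
    (by simp)]
  simp

lemma transportCost_glueSnd_le {ε : ℝ} (c : PMF (S × S)) {κ : S → PMF S}
    (hκ : ∀ y, ∀ z ∈ (κ y).support, z ∈ Metric.closedBall y ε) :
    transportCost (glueSnd c κ) ≤ transportCost c + ε := by
  have hmove (q : S × S) : transportCost ((κ q.2).map (Prod.mk q.1)) ≤ dist q.1 q.2 + ε := by
    rw [transportCost_map_prodMk]
    refine PMF.sum_toReal_mul_le fun z hz => ?_
    have := Metric.mem_closedBall'.1 (hκ q.2 z hz)
    linarith [dist_triangle q.1 q.2 z]
  calc transportCost (glueSnd c κ)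
      ≤ ∑ q, (c q).toReal * (dist q.1 q.2 + ε) := by
        rw [glueSnd, transportCost_bind]
        exact Finset.sum_le_sum fun q _ =>
          mul_le_mul_of_nonneg_left (hmove q) ENNReal.toReal_nonneg
    _ = transportCost c + ε := by
        simp only [mul_add, Finset.sum_add_distrib, ← Finset.sum_mul, c.sum_toReal_s11, one_mul,
          transportCost]

lemma W1_eq_sInf (μ ν : PMF S) :
    W1 μ ν = sInf (transportCost '' {c | IsCoupling c μ ν}) := rfl

lemma bddBelow_transportCost_image (μ ν : PMF S) :
    BddBelow (transportCost '' {c | IsCoupling c μ ν}) :=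
  ⟨0, fun _ ⟨c, _, hc⟩ => hc ▸ transportCost_nonneg c⟩

lemma W1_le_transportCost {c : PMF (S × S)} {μ ν : PMF S} (h : IsCoupling c μ ν) :
    W1 μ ν ≤ transportCost c :=
  csInf_le (bddBelow_transportCost_image μ ν) ⟨c, h, rfl⟩

lemma exists_isCoupling_transportCost_lt {μ ν : PMF S} {r : ℝ} (h : W1 μ ν < r) :
    ∃ c, IsCoupling c μ ν ∧ transportCost c < r := by
  obtain ⟨c, hc⟩ := exists_isCoupling μ ν
  rw [W1_eq_sInf, csInf_lt_iff (bddBelow_transportCost_image μ ν) ⟨_, c, hc, rfl⟩] at h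
  obtain ⟨_, ⟨c, hc, rfl⟩, hlt⟩ := h
  exact ⟨c, hc, hlt⟩

lemma W1_bind_le {α : Type*} [Fintype α] (μ : PMF S) (p : PMF α) (t : α → PMF S) :
    W1 μ (p.bind t) ≤ ∑ s, (p s).toReal * W1 μ (t s) := by
  refine le_of_forall_pos_le_add fun δ hδ => ?_
  choose c hc hcost using fun s => exists_isCoupling_transportCost_lt
    (lt_add_of_pos_right (W1 μ (t s)) hδ)
  have hmix : IsCoupling (p.bind c) μ (p.bind t) := by
    simpa only [PMF.bind_const] using IsCoupling.bind hc p
  calc W1 μ (p.bind t) ≤ ∑ s, (p s).toReal * transportCost (c s) := by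
        rw [← transportCost_bind]
        exact W1_le_transportCost hmix
    _ ≤ ∑ s, (p s).toReal * (W1 μ (t s) + δ) :=
        Finset.sum_le_sum fun s _ =>
          mul_le_mul_of_nonneg_left (hcost s).le ENNReal.toReal_nonneg
    _ = ∑ s, (p s).toReal * W1 μ (t s) + δ := by
        simp only [mul_add, Finset.sum_add_distrib, ← Finset.sum_mul, p.sum_toReal_s11, one_mul]

lemma W1_bind_le_add {ε : ℝ} (μ ν : PMF S) {κ : S → PMF S}
    (hκ : ∀ y, ∀ z ∈ (κ y).support, z ∈ Metric.closedBall y ε) :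
    W1 μ (ν.bind κ) ≤ W1 μ ν + ε := by
  obtain ⟨c₀, hc₀⟩ := exists_isCoupling μ ν
  rw [← sub_le_iff_le_add, W1_eq_sInf μ ν]
  refine le_csInf ⟨_, c₀, hc₀, rfl⟩ ?_
  rintro _ ⟨c, hc, rfl⟩
  rw [sub_le_iff_le_add]
  exact (W1_le_transportCost (isCoupling_glueSnd hc κ)).trans (transportCost_glueSnd_le c hκ)

end TransportCost

theorem stmt11_general {S : Type*} [Fintype S] [MetricSpace S]
    (t ν : S → PMF S) (b : PMF S) (s_o : S) (ε ξ : ℝ)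
    (hb : ∀ s ∈ b.support, s ∈ Metric.closedBall s_o ε)
    (ht : ∀ s s' : S, dist s s' ≤ ε → W1 (t s) (t s') ≤ ξ)
    (hν : ∀ s' : S, ∀ s'' ∈ (ν s').support, s'' ∈ Metric.closedBall s' ε) :
    W1 (t s_o) ((b.bind t).bind ν) ≤ ξ + ε := by
  have hmix : W1 (t s_o) (b.bind t) ≤ ξ :=
    (W1_bind_le _ b t).trans <| PMF.sum_toReal_mul_le fun s hs =>
      ht s_o s (Metric.mem_closedBall'.1 (hb s hs))
  linarith [W1_bind_le_add (t s_o) (b.bind t) hν]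

/-- let `t` be the transition kernel, `ν` the adversary's perturbation
kernel, `b` a belief supported within distance `ε` of the observation `s_o`.  If
`W1(t s, t s') ≤ ξ` whenever `dist s s' ≤ ε`, and `ν s'` is supported in the closed
`ε`-ball around `s'` for every `s'`, then `W1(t s_o, (b.bind t).bind ν) ≤ ξ + ε`. -/
theorem stmt11 {S : Type*} [Fintype S] [MetricSpace S]
    (t ν : S → PMF S) (b : PMF S) (s_o : S) (ε ξ : ℝ) (hε : 0 ≤ ε) (hξ : 0 ≤ ξ)
    (hb : ∀ s ∈ b.support, s ∈ Metric.closedBall s_o ε)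
    (ht : ∀ s s' : S, dist s s' ≤ ε → W1 (t s) (t s') ≤ ξ)
    (hν : ∀ s' : S, ∀ s'' ∈ (ν s').support, s'' ∈ Metric.closedBall s' ε) :
    W1 (t s_o) ((b.bind t).bind ν) ≤ ξ + ε :=
  stmt11_general t ν b s_o ε ξ hb ht hν
end
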